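/- arXiv:2105.00656 — 5 statements merged into one kernel-verified Lean document; each statement's English description precedes it below -/
import Mathlib

section
/- Let ab be a segment of length l in the plane, let f be a 1-Lipschitz positive function with f(a) = P·l where A ≤ P ≤ B and B = 2αA for some α > 1 and A > 4. Then there exists a point v on the perpendicular bisector of ab with |va| = |vb| = λl for some λ > 0 such that A + 1 ≤ f(v)/(λl) ≤ B - 1. In particular, it suffices to choose the angle θ = ∠bav so that A + 2 ≤ 2P cos θ ≤ B - 2, with λ = 1/(2 cos θ). -/
/-!
Take `λ = P / (A + 2)` and let `v` be the apex of the isosceles triangle over `ab` with legs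
`λ l`, so that `cos ∠bav = 1 / (2λ)` and hence `2 P cos ∠bav = A + 2`. Since `f` is
1-Lipschitz, `f v / (λ l)` differs by at most one from `f a / (λ l) = A + 2`, and
`A + 3 ≤ B - 1` because `B = 2αA > 2A > A + 4`.
-/

open Real InnerProductSpace

section InnerProductSpace

variable {V : Type*} [NormedAddCommGroup V] [InnerProductSpace ℝ V]

theorem norm_smul_add_smul_sq_of_inner_eq_zero {w u : V} (hwu : ⟪w, u⟫_ℝ = 0)
    (hu : ‖u‖ = ‖w‖) (s t : ℝ) : ‖s • w + t • u‖ ^ 2 = (s ^ 2 + t ^ 2) * ‖w‖ ^ 2 := by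
  rw [norm_add_sq_real, real_inner_smul_left, real_inner_smul_right, hwu, norm_smul,
    norm_smul, hu, Real.norm_eq_abs, Real.norm_eq_abs, mul_pow, mul_pow, sq_abs, sq_abs]
  ring

theorem exists_inner_eq_zero_norm_eq (h : 2 ≤ Module.finrank ℝ V) (w : V) :
    ∃ u : V, ⟪w, u⟫_ℝ = 0 ∧ ‖u‖ = ‖w‖ := by
  have : FiniteDimensional ℝ V := Module.finite_of_finrank_pos (by omega)
  have hspan : (ℝ ∙ w) ≠ ⊤ := by
    intro htop
    have := finrank_span_le_card (R := ℝ) ({w} : Set V)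
    rw [htop, finrank_top] at this
    rw [Set.toFinset_singleton, Finset.card_singleton] at this
    omega
  obtain ⟨x, hx, hx0⟩ := Submodule.exists_mem_ne_zero_of_ne_bot
    (mt Submodule.orthogonal_eq_bot_iff.mp hspan)
  refine ⟨(‖w‖ / ‖x‖) • x, ?_, ?_⟩
  · rw [inner_smul_right, Submodule.mem_orthogonal_singleton_iff_inner_right.mp hx, mul_zero]
  · rw [norm_smul, Real.norm_eq_abs, abs_div, abs_norm, abs_norm,
      div_mul_cancel₀ _ (norm_ne_zero_iff.mpr hx0)]

open EuclideanGeometry in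
theorem exists_dist_eq_mul_dist_cos_angle_eq (h : 2 ≤ Module.finrank ℝ V) {a b : V}
    (hab : a ≠ b) {lam : ℝ} (hlam : 1 / 2 ≤ lam) :
    ∃ v : V, dist v a = lam * dist a b ∧ dist v b = lam * dist a b ∧
      cos (∠ b a v) = 1 / (2 * lam) := by
  set w := b - a
  have hw : ‖w‖ = dist a b := (dist_eq_norm' a b).symm
  have hw0 : 0 < ‖w‖ := hw ▸ dist_pos.mpr hab
  obtain ⟨u, hwu, hu⟩ := exists_inner_eq_zero_norm_eq h w
  set t := √(lam ^ 2 - 1 / 4)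
  have ht : t ^ 2 = lam ^ 2 - 1 / 4 := sq_sqrt (by nlinarith)
  have hnorm : ∀ s : ℝ, s ^ 2 = 1 / 4 → ‖s • w + t • u‖ = lam * ‖w‖ := fun s hs => by
    rw [← sq_eq_sq₀ (norm_nonneg _) (by positivity),
      norm_smul_add_smul_sq_of_inner_eq_zero hwu hu, hs, ht]
    ring
  set v := a + ((1 / 2 : ℝ) • w + t • u)
  have hva : v - a = (1 / 2 : ℝ) • w + t • u := add_sub_cancel_left _ _
  have hvb : v - b = (-1 / 2 : ℝ) • w + t • u := by
    simp only [v, w]; module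
  have hdva : dist v a = lam * ‖w‖ := by rw [dist_eq_norm, hva, hnorm _ (by norm_num)]
  refine ⟨v, hw ▸ hdva, ?_, ?_⟩
  · rw [dist_eq_norm, hvb, hnorm _ (by norm_num), hw]
  · change cos (InnerProductGeometry.angle w (v - a)) = _
    rw [InnerProductGeometry.cos_angle, ← dist_eq_norm v a, hdva, hva, inner_add_right,
      real_inner_smul_right, real_inner_smul_right, hwu, mul_zero, add_zero,
      real_inner_self_eq_norm_sq]
    field_simp

end InnerProductSpace

theorem Real.mem_Ioo_pi_div_two_of_cos_mem_Ioo {θ : ℝ} (h0 : 0 ≤ θ) (hπ : θ ≤ π)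
    (hcos : cos θ ∈ Set.Ioo 0 1) : θ ∈ Set.Ioo 0 (π / 2) := by
  rw [← arccos_cos h0 hπ]
  exact ⟨arccos_pos.mpr hcos.2, arccos_lt_pi_div_two.mpr hcos.1⟩

theorem LipschitzWith.abs_div_sub_div_le_one {X : Type*} [PseudoMetricSpace X] {f : X → ℝ}
    (hf : LipschitzWith 1 f) {x y : X} {d : ℝ} (hd : 0 < d) (hxy : dist x y = d) :
    |f x / d - f y / d| ≤ 1 := by
  rw [← sub_div, abs_div, abs_of_pos hd, div_le_one hd, ← hxy, ← Real.dist_eq]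
  simpa using hf.dist_le_mul x y

theorem stmt_1_general (f : EuclideanSpace ℝ (Fin 2) → ℝ)
    (hf : LipschitzWith 1 f)
    (a b : EuclideanSpace ℝ (Fin 2)) (l : ℝ) (hl : l = dist a b) (hlpos : 0 < l)
    (A B P α : ℝ) (hα : 1 < α) (hA : 4 < A) (hB : B = 2 * α * A)
    (hPA : A ≤ P) (hfa : f a = P * l) :
    ∃ (v : EuclideanSpace ℝ (Fin 2)) (lam : ℝ), 0 < lam ∧
      dist v a = lam * l ∧ dist v b = lam * l ∧
      (∃ θ ∈ Set.Ioo 0 (π / 2), θ = EuclideanGeometry.angle b a v ∧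
        lam = 1 / (2 * Real.cos θ) ∧
        A + 2 ≤ 2 * P * Real.cos θ ∧ 2 * P * Real.cos θ ≤ B - 2) ∧
      A + 1 ≤ f v / (lam * l) ∧ f v / (lam * l) ≤ B - 1 := by
  set lam := P / (A + 2)
  have hlam : 1 / 2 < lam := by rw [lt_div_iff₀ (by linarith)]; linarith
  have hPlam : lam * (A + 2) = P := div_mul_cancel₀ _ (by linarith)
  have hlam_pos : 0 < lam := by linarith
  obtain ⟨v, hva, hvb, hcos⟩ := exists_dist_eq_mul_dist_cos_angle_eq
    (finrank_euclideanSpace_fin (n := 2)).ge (dist_pos.mp (hl ▸ hlpos)) hlam.le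
  rw [← hl] at hva hvb
  have hθ : EuclideanGeometry.angle b a v ∈ Set.Ioo 0 (π / 2) :=
    Real.mem_Ioo_pi_div_two_of_cos_mem_Ioo (EuclideanGeometry.angle_nonneg _ _ _)
      (EuclideanGeometry.angle_le_pi _ _ _) (hcos ▸ ⟨by positivity, by
        rw [div_lt_one (by linarith)]; linarith⟩)
  have h2Pcos : 2 * P * cos (EuclideanGeometry.angle b a v) = A + 2 := by
    rw [hcos, ← hPlam]; field_simp
  have hfa' : f a / (lam * l) = A + 2 := by rw [hfa, ← hPlam]; field_simp
  have hratio := abs_sub_le_iff.mp (hf.abs_div_sub_div_le_one (by positivity) hva)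
  have hAB : A + 4 ≤ B := by nlinarith
  refine ⟨v, lam, hlam_pos, hva, hvb, ⟨_, hθ, rfl, by rw [hcos]; field_simp,
    h2Pcos.ge, by linarith⟩, by linarith, by linarith⟩

/-- Existence of an off-center vertex on the perpendicular bisector of an edge `ab`
satisfying the LFS-edge ratio constraints: if `f` is positive and 1-Lipschitz with
`f a = P * l`, `A ≤ P ≤ B`, `B = 2 * α * A`, `α > 1`, `A > 4`, then there is a point `v`
equidistant from `a` and `b` with `|va| = |vb| = λ * l`, `λ = 1/(2 cos θ)` for some
`θ = ∠ b a v` with `A + 2 ≤ 2 P cos θ ≤ B - 2`, such that `A + 1 ≤ f v / (λ * l) ≤ B - 1`. -/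
theorem stmt_1 (f : EuclideanSpace ℝ (Fin 2) → ℝ)
    (hf : LipschitzWith 1 f) (hfpos : ∀ x, 0 < f x)
    (a b : EuclideanSpace ℝ (Fin 2)) (l : ℝ) (hl : l = dist a b) (hlpos : 0 < l)
    (A B P α : ℝ) (hα : 1 < α) (hA : 4 < A) (hB : B = 2 * α * A)
    (hPA : A ≤ P) (hPB : P ≤ B) (hfa : f a = P * l) :
    ∃ (v : EuclideanSpace ℝ (Fin 2)) (lam : ℝ), 0 < lam ∧
      dist v a = lam * l ∧ dist v b = lam * l ∧
      (∃ θ ∈ Set.Ioo 0 (π / 2), θ = EuclideanGeometry.angle b a v ∧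
        lam = 1 / (2 * Real.cos θ) ∧
        A + 2 ≤ 2 * P * Real.cos θ ∧ 2 * P * Real.cos θ ≤ B - 2) ∧
      A + 1 ≤ f v / (lam * l) ∧ f v / (lam * l) ≤ B - 1 :=
  stmt_1_general f hf a b l hl hlpos A B P α hα hA hB hPA hfa
end

section
/- Let triangle abc in the plane have circumcenter o and circumradius r, with shortest side ab, and suppose the triangle is skinny, i.e., r/|ab| > α for some α > 1. Let f be a 1-Lipschitz function with f(x)/|e| ≤ B for every side e and endpoint x of e, where all side lengths are at least f(x)/B at each endpoint x. If B/α ≤ B - 2, then r ≥ f(p)/B for each p ∈ {a, b, c, o}. -/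
/-!
Skinniness gives `f a, f b ≤ B |ab| < B r / α ≤ (B - 2) r`.
The points `c` and `o` lie within `2r` and `r` of `a`, so the 1-Lipschitz bound raises `f` there
by at most `2r`, which still stays below `B r`.
-/

lemma two_lt_of_div_le_sub_two {α B : ℝ} (hα : 1 < α) (hBα : B / α ≤ B - 2) : 2 < B := by
  have h : B ≤ (B - 2) * α := (div_le_iff₀ (by linarith)).mp hBα
  nlinarith

lemma mul_lt_of_lt_div_of_nonneg {α d r : ℝ} (hα : 0 < α) (hd : 0 ≤ d) (h : α < r / d) :
    α * d < r := by
  rcases hd.eq_or_lt with rfl | hd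
  · rw [div_zero] at h
    exact absurd h hα.not_gt
  · exact (lt_div_iff₀ hd).mp h

lemma mul_le_sub_two_mul_of_mul_lt {α B d r : ℝ} (hα : 1 < α) (hBα : B / α ≤ B - 2)
    (hd : 0 ≤ d) (hdr : α * d < r) : B * d ≤ (B - 2) * r := by
  have hB := two_lt_of_div_le_sub_two hα hBα
  have hαd : 0 ≤ α * d := by positivity
  calc B * d = B / α * (α * d) := by field_simp
    _ ≤ (B - 2) * (α * d) := by gcongr
    _ ≤ (B - 2) * r := by gcongr

theorem stmt_3_general (f : EuclideanSpace ℝ (Fin 2) → ℝ) (hf : LipschitzWith 1 f)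
    (a b c o : EuclideanSpace ℝ (Fin 2)) (r α B : ℝ) (hα : 1 < α)
    (hoa : dist o a = r) (hoc : dist o c = r)
    (hskinny : r / dist a b > α)
    (hside : ∀ x y : EuclideanSpace ℝ (Fin 2),
      ((x = a ∧ y = b) ∨ (x = b ∧ y = c) ∨ (x = a ∧ y = c)) →
      f x ≤ B * dist x y ∧ f y ≤ B * dist x y)
    (hBα : B / α ≤ B - 2) :
    f a / B ≤ r ∧ f b / B ≤ r ∧ f c / B ≤ r ∧ f o / B ≤ r := by
  have hB : 0 < B := by linarith [two_lt_of_div_le_sub_two hα hBα]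
  have hr : 0 ≤ r := hoa ▸ dist_nonneg
  have hab : B * dist a b ≤ (B - 2) * r :=
    mul_le_sub_two_mul_of_mul_lt hα hBα dist_nonneg
      (mul_lt_of_lt_div_of_nonneg (by linarith) dist_nonneg hskinny)
  obtain ⟨hfa, hfb⟩ := hside a b (Or.inl ⟨rfl, rfl⟩)
  have hfc : f c ≤ f a + 2 * r := by
    have hca : dist c a ≤ 2 * r := by linarith [dist_triangle_left c a o]
    have h := hf.le_add_mul c a
    rw [NNReal.coe_one, one_mul] at h
    linarith
  have hfo : f o ≤ f a + r := by simpa [hoa] using hf.le_add_mul o a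
  simp only [div_le_iff₀ hB]
  refine ⟨?_, ?_, ?_, ?_⟩ <;> linarith

/-- A skinny triangle's circumradius is at least `f p / B` for each vertex `p` and the
circumcenter `o`: `abc` has circumcenter `o` with circumradius `r`, shortest side `ab`,
`r / |ab| > α` (skinny), `f` is 1-Lipschitz with `f x ≤ B * |e|` for every side `e` and
endpoint `x` of `e` (i.e. every side length is at least `f x / B` at each endpoint), and
`B / α ≤ B - 2`. -/
theorem stmt_3 (f : EuclideanSpace ℝ (Fin 2) → ℝ) (hf : LipschitzWith 1 f)
    (a b c o : EuclideanSpace ℝ (Fin 2)) (r α B : ℝ) (hα : 1 < α)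
    (hoa : dist o a = r) (hob : dist o b = r) (hoc : dist o c = r)
    (hab_bc : dist a b ≤ dist b c) (hab_ac : dist a b ≤ dist a c)
    (habpos : 0 < dist a b)
    (hskinny : r / dist a b > α)
    (hside : ∀ x y : EuclideanSpace ℝ (Fin 2),
      ((x = a ∧ y = b) ∨ (x = b ∧ y = c) ∨ (x = a ∧ y = c)) →
      f x ≤ B * dist x y ∧ f y ≤ B * dist x y)
    (hBα : B / α ≤ B - 2) :
    f a / B ≤ r ∧ f b / B ≤ r ∧ f c / B ≤ r ∧ f o / B ≤ r :=
  stmt_3_general f hf a b c o r α B hα hoa hoc hskinny hside hBα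
end

section
/- Let ω > 1, B > 0, Γ ≥ 1, 1 ≤ λ < ω, and n ≥ 1. Then (Γ/λ)·(B/ωⁿ + ∑_{k=1}^{n} 1/ω^k + 1 + λ) ≤ Γ·(B + ω/(ω-1) + 1). Hence the LFS-edge ratio of every vertex inserted by the advancing-front volume refinement is bounded by Γ·(B** + ω*/(ω*-1) + 1), and the algorithm terminates with a graded mesh. -/
open Finset

/-! The partial sums of `∑_{k ≥ 1} ω⁻ᵏ` are at most `1/(ω-1)`, and `1/(ω-1) + 1 = ω/(ω-1)`.
Dividing by `λ ≥ 1` shrinks every summand except `λ` itself, which becomes `1`, and `B/ωⁿ ≤ B`. -/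

theorem sum_Icc_one_div_pow_le {ω : ℝ} (hω : 1 < ω) (n : ℕ) :
    ∑ k ∈ Icc 1 n, 1 / ω ^ k ≤ 1 / (ω - 1) := by
  have hω' : 0 < ω - 1 := sub_pos.mpr hω
  calc ∑ k ∈ Icc 1 n, 1 / ω ^ k = ∑ k ∈ Ico 1 (n + 1), ω⁻¹ ^ k := by
        simp only [← Ico_add_one_right_eq_Icc, one_div, inv_pow]
    _ ≤ ω⁻¹ ^ 1 / (1 - ω⁻¹) :=
        geom_sum_Ico_le_of_lt_one (by positivity) (inv_lt_one_of_one_lt₀ hω)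
    _ = 1 / (ω - 1) := by
        field_simp

theorem one_div_sub_one_add_one {ω : ℝ} (hω : ω ≠ 1) : 1 / (ω - 1) + 1 = ω / (ω - 1) := by
  field_simp [sub_ne_zero.mpr hω]
  ring

theorem stmt_8_general (ω B Γ lam : ℝ) (n : ℕ)
    (hω : 1 < ω) (hB : 0 < B) (hΓ : 1 ≤ Γ) (hlam : 1 ≤ lam) :
    (Γ / lam) * (B / ω ^ n + (∑ k ∈ Finset.Icc 1 n, 1 / ω ^ k) + 1 + lam)
      ≤ Γ * (B + ω / (ω - 1) + 1) := by
  set S := ∑ k ∈ Icc 1 n, 1 / ω ^ k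
  have hS : S ≤ 1 / (ω - 1) := sum_Icc_one_div_pow_le hω n
  have hS0 : 0 ≤ S := sum_nonneg fun k _ => by positivity
  have hBn : B / ω ^ n ≤ B := div_le_self hB.le (one_le_pow₀ hω.le)
  calc (Γ / lam) * (B / ω ^ n + S + 1 + lam) = Γ * ((B / ω ^ n + S + 1) / lam + 1) := by
        field_simp
    _ ≤ Γ * ((B / ω ^ n + S + 1) + 1) := by
        gcongr
        exact div_le_self (by positivity) hlam
    _ ≤ Γ * (B + 1 / (ω - 1) + 1 + 1) := by gcongr
    _ = Γ * (B + ω / (ω - 1) + 1) := by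
        rw [← one_div_sub_one_add_one hω.ne']
        ring

/-- Grading bound for the 3D advancing-front volume refinement: for `ω > 1`, `B > 0`,
`Γ ≥ 1`, `1 ≤ λ < ω`, and `n ≥ 1`,
`(Γ/λ) (B/ωⁿ + ∑_{k=1}^{n} 1/ω^k + 1 + λ) ≤ Γ (B + ω/(ω-1) + 1)`,
so the LFS-edge ratio of every inserted vertex is bounded. -/
theorem stmt_8 (ω B Γ lam : ℝ) (n : ℕ)
    (hω : 1 < ω) (hB : 0 < B) (hΓ : 1 ≤ Γ) (hlam : 1 ≤ lam) (hlamω : lam < ω)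
    (hn : 1 ≤ n) :
    (Γ / lam) * (B / ω ^ n + (∑ k ∈ Finset.Icc 1 n, 1 / ω ^ k) + 1 + lam)
      ≤ Γ * (B + ω / (ω - 1) + 1) :=
  stmt_8_general ω B Γ lam n hω hB hΓ hlam
end

section
/- Suppose a segment is subdivided at points M(k·T/n) for k = 0, …, n, where M solves M'(t) = f(M(t)) with f positive and 1-Lipschitz, and T is chosen so M(T) is the right endpoint. If p = M(kT/n) is a subdivision vertex and l_p is the length of an adjacent subsegment, then the ratio f(p)/l_p satisfies n/T - 1 ≤ f(p)/l_p ≤ n/T + 1. -/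
/-!
Since `M` is increasing, for `p ∈ [M a, M b]` and `t ∈ [a, b]` we have
`|M t - p| ≤ l := M b - M a`, so the speed `M' t = f (M t)` stays within `l` of `f p`
because `f` is 1-Lipschitz. The mean value inequality over a step of length `h = T / n`
gives `|l - f p * h| ≤ l * h`, that is `|1 / h - f p / l| ≤ 1`.
-/

open Set

theorem abs_sub_mul_le_of_hasDerivAt_comp {f M : ℝ → ℝ} (hf : LipschitzWith 1 f)
    (hM : ∀ t, HasDerivAt M (f (M t)) t) (hMmono : Monotone M) {a b p : ℝ} (hab : a ≤ b)
    (hp : p ∈ Icc (M a) (M b)) :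
    |M b - M a - f p * (b - a)| ≤ (M b - M a) * (b - a) := by
  have hderiv : ∀ t ∈ Icc a b,
      HasDerivWithinAt (fun t ↦ M t - t * f p) (f (M t) - f p) (Icc a b) t := fun t _ ↦
    ((hM t).sub (hasDerivAt_mul_const (f p))).hasDerivWithinAt
  have hspeed : ∀ t ∈ Ico a b, ‖f (M t) - f p‖ ≤ M b - M a := fun t ht ↦
    calc ‖f (M t) - f p‖ = dist (f (M t)) (f p) := (Real.dist_eq _ _).symm
      _ ≤ dist (M t) p := by simpa using hf.dist_le_mul (M t) p
      _ ≤ M b - M a :=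
        Real.dist_le_of_mem_Icc ⟨hMmono ht.1, hMmono ht.2.le⟩ hp
  have := norm_image_sub_le_of_norm_deriv_le_segment' hderiv hspeed b (right_mem_Icc.2 hab)
  rw [Real.norm_eq_abs] at this
  convert this using 2
  ring

theorem abs_inv_sub_div_le_one {l h c : ℝ} (hl : 0 < l) (hh : 0 < h)
    (H : |l - c * h| ≤ l * h) : |h⁻¹ - c / l| ≤ 1 := by
  have hlh : 0 < l * h := mul_pos hl hh
  have : h⁻¹ - c / l = (l - c * h) / (l * h) := by field_simp
  rw [this, abs_div, abs_of_pos hlh, div_le_one hlh]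
  exact H

theorem stmt_11_general (f : ℝ → ℝ) (hfpos : ∀ x, 0 < f x) (hf : LipschitzWith 1 f)
    (M : ℝ → ℝ) (hM : ∀ t, HasDerivAt M (f (M t)) t)
    (T : ℝ) (hT : 0 < T) (n : ℕ) :
    ∀ k : ℕ, k < n →
      ∀ p : ℝ, (p = M ((k : ℝ) * T / n) ∨ p = M (((k : ℝ) + 1) * T / n)) →
        (n : ℝ) / T - 1 ≤ f p / (M (((k : ℝ) + 1) * T / n) - M ((k : ℝ) * T / n)) ∧
        f p / (M (((k : ℝ) + 1) * T / n) - M ((k : ℝ) * T / n)) ≤ (n : ℝ) / T + 1 := by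
  intro k hk p hp
  have hn : (0 : ℝ) < n := by exact_mod_cast k.zero_le.trans_lt hk
  set a : ℝ := (k : ℝ) * T / n
  set b : ℝ := ((k : ℝ) + 1) * T / n
  have hstep : b - a = T / n := by simp only [a, b]; ring
  have hab : a < b := sub_pos.1 (hstep ▸ div_pos hT hn)
  have hMmono : StrictMono M := strictMono_of_deriv_pos fun t ↦ (hM t).deriv ▸ hfpos _
  have hMab : M a < M b := hMmono hab
  have hp : p ∈ Icc (M a) (M b) := by
    rcases hp with rfl | rfl
    · exact left_mem_Icc.2 hMab.le
    · exact right_mem_Icc.2 hMab.le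
  have key := abs_inv_sub_div_le_one (sub_pos.2 hMab) (sub_pos.2 hab)
    (abs_sub_mul_le_of_hasDerivAt_comp hf hM hMmono.monotone hab.le hp)
  rw [hstep, inv_div] at key
  obtain ⟨h₁, h₂⟩ := abs_sub_le_iff.1 key
  exact ⟨by linarith, by linarith⟩

/-- LFS-edge ratio bounds for the 1D LFS-based refinement (Lemma 1): if a segment is
subdivided at the points `M (k·T/n)`, `k = 0, …, n`, where `M` solves `M' t = f (M t)`
with `f` positive and 1-Lipschitz, then for every subsegment
`[M (k·T/n), M ((k+1)·T/n)]` of length `l` and either endpoint `p` of the subsegment,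
`n/T - 1 ≤ f p / l ≤ n/T + 1`. -/
theorem stmt_11 (f : ℝ → ℝ) (hfpos : ∀ x, 0 < f x) (hf : LipschitzWith 1 f)
    (M : ℝ → ℝ) (hM : ∀ t, HasDerivAt M (f (M t)) t)
    (T : ℝ) (hT : 0 < T) (n : ℕ) (hn : 1 ≤ n) :
    ∀ k : ℕ, k < n →
      ∀ p : ℝ, (p = M ((k : ℝ) * T / n) ∨ p = M (((k : ℝ) + 1) * T / n)) →
        (n : ℝ) / T - 1 ≤ f p / (M (((k : ℝ) + 1) * T / n) - M ((k : ℝ) * T / n)) ∧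
        f p / (M (((k : ℝ) + 1) * T / n) - M ((k : ℝ) * T / n)) ≤ (n : ℝ) / T + 1 :=
  stmt_11_general f hfpos hf M hM T hT n
end

section
/- Let F > 0, d > 0, B > 0, and φ ∈ (0, π). Consider two half-planes meeting along a line at dihedral angle φ; the distance from a point at distance at least d from the common line on one half-plane to the other half-plane is at least d·sin φ. Consequently, if (F + d)/B < d·sin φ and every triangle with all vertices at distance ≥ d from the common line has diametral-sphere radius at most (F + d)/B, then no vertex of one half-plane at distance ≥ d from the line lies inside the diametral sphere of such a triangle on the other half-plane. -/
open Real

/-! The squared distance between `s • e + t • u` and `s' • e + t' • v` splits orthogonally as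
`(s - s')² + (t' - t cos φ)² + (t sin φ)²`, so it is at least `(t sin φ)²`; for `t ≥ d` and
`sin φ ≥ 0` this gives the bound `d sin φ`, and a sphere of radius below `d sin φ` cannot
reach the other half-plane. -/

section HalfPlanes

variable {E : Type*} [NormedAddCommGroup E] [InnerProductSpace ℝ E] {e u v : E}

theorem dist_smul_add_smul_sq (he : ‖e‖ = 1) (hu : ‖u‖ = 1) (hv : ‖v‖ = 1)
    (hue : inner ℝ u e = (0 : ℝ)) (hve : inner ℝ v e = (0 : ℝ)) (s t s' t' : ℝ) :
    dist (s • e + t • u) (s' • e + t' • v) ^ 2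
      = (s - s') ^ 2 + (t' - t * inner ℝ u v) ^ 2 + t ^ 2 * (1 - inner ℝ u v ^ 2) := by
  have heu : inner ℝ e u = (0 : ℝ) := by rw [real_inner_comm, hue]
  have hev : inner ℝ e v = (0 : ℝ) := by rw [real_inner_comm, hve]
  rw [dist_eq_norm, ← real_inner_self_eq_norm_sq]
  simp only [inner_sub_left, inner_sub_right, inner_add_left, inner_add_right,
    real_inner_smul_left, real_inner_smul_right, hue, hve, heu, hev, real_inner_comm u v,
    real_inner_self_eq_norm_sq, norm_smul, norm_eq_abs, mul_pow, sq_abs, he, hu, hv]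
  ring

theorem mul_sin_le_dist_smul_add_smul {φ : ℝ} (he : ‖e‖ = 1) (hu : ‖u‖ = 1) (hv : ‖v‖ = 1)
    (hue : inner ℝ u e = (0 : ℝ)) (hve : inner ℝ v e = (0 : ℝ))
    (huv : inner ℝ u v = Real.cos φ) (s t s' t' : ℝ) :
    t * Real.sin φ ≤ dist (s • e + t • u) (s' • e + t' • v) := by
  have hsq : (t * Real.sin φ) ^ 2 ≤ dist (s • e + t • u) (s' • e + t' • v) ^ 2 := by
    rw [dist_smul_add_smul_sq he hu hv hue hve, huv, ← sin_sq]
    nlinarith [sq_nonneg (s - s'), sq_nonneg (t' - t * Real.cos φ)]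
  exact (le_abs_self _).trans (abs_le_of_sq_le_sq hsq dist_nonneg)

end HalfPlanes

theorem stmt_12_general (F d B φ : ℝ)
    (hφ : φ ∈ Set.Ioo 0 π)
    (e u v : EuclideanSpace ℝ (Fin 3))
    (he : ‖e‖ = 1) (hu : ‖u‖ = 1) (hv : ‖v‖ = 1)
    (hue : inner ℝ u e = (0 : ℝ)) (hve : inner ℝ v e = (0 : ℝ))
    (huv : inner ℝ u v = Real.cos φ) :
    (∀ s t s' t' : ℝ, d ≤ t → 0 ≤ t' →
        d * Real.sin φ ≤ dist (s • e + t • u) (s' • e + t' • v)) ∧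
    ((F + d) / B < d * Real.sin φ →
      ∀ ρ : ℝ, ρ ≤ (F + d) / B →
        ∀ s t s' t' : ℝ, d ≤ t → 0 ≤ t' →
          ¬ dist (s' • e + t' • v) (s • e + t • u) < ρ) := by
  have hsin : 0 ≤ Real.sin φ := sin_nonneg_of_nonneg_of_le_pi hφ.1.le hφ.2.le
  have separated : ∀ s t s' t' : ℝ, d ≤ t →
      d * Real.sin φ ≤ dist (s • e + t • u) (s' • e + t' • v) := fun s t s' t' ht =>
    (mul_le_mul_of_nonneg_right ht hsin).trans
      (mul_sin_le_dist_smul_add_smul he hu hv hue hve huv s t s' t')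
  refine ⟨fun s t s' t' ht _ => separated s t s' t' ht, fun hlt ρ hρ s t s' t' ht _ h => ?_⟩
  rw [dist_comm] at h
  linarith [separated s t s' t' ht]

/-- Two half-planes in `ℝ³` meeting along a common line (direction `e`) at dihedral
angle `φ` (directions `u`, `v` orthogonal to `e` with `⟪u,v⟫ = cos φ`): a point of one
half-plane at distance at least `d` from the common line is at distance at least
`d sin φ` from every point of the other half-plane. Consequently, if
`(F + d)/B < d sin φ`, then no point of one half-plane lies inside a sphere of radius
at most `(F + d)/B` centered at a point of the other half-plane at distance at least
`d` from the common line (Gabriel's condition outside the cylindrical boundary layer). -/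
theorem stmt_12 (F d B φ : ℝ) (hF : 0 < F) (hd : 0 < d) (hB : 0 < B)
    (hφ : φ ∈ Set.Ioo 0 π)
    (e u v : EuclideanSpace ℝ (Fin 3))
    (he : ‖e‖ = 1) (hu : ‖u‖ = 1) (hv : ‖v‖ = 1)
    (hue : inner ℝ u e = (0 : ℝ)) (hve : inner ℝ v e = (0 : ℝ))
    (huv : inner ℝ u v = Real.cos φ) :
    (∀ s t s' t' : ℝ, d ≤ t → 0 ≤ t' →
        d * Real.sin φ ≤ dist (s • e + t • u) (s' • e + t' • v)) ∧
    ((F + d) / B < d * Real.sin φ →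
      ∀ ρ : ℝ, ρ ≤ (F + d) / B →
        ∀ s t s' t' : ℝ, d ≤ t → 0 ≤ t' →
          ¬ dist (s' • e + t' • v) (s • e + t • u) < ρ) :=
  stmt_12_general F d B φ hφ e u v he hu hv hue hve huv
end
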